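/- arXiv:2503.22297 — 5 statements merged into one kernel-verified Lean document; each statement's English description precedes it below -/
import Mathlib

section
/- Let (S, μ) be a measure space, let k > 0 and q > 0, and set D := q/k. Let v : S × ℝ → ℂ be measurable and such that for μ-almost every s ∈ S the function x ↦ v(s, x) is continuously differentiable on [0, D]; denote by ∂₂v its derivative in the second variable. Assume (s,x) ↦ |v(s,x)|² and (s,x) ↦ |∂₂v(s,x)|² are integrable on S × (0, D) and s ↦ |v(s, D)|² is integrable on S. Then k² ∫_S ∫₀^D |v(s,x)|² dx dμ(s) ≤ 2qk ∫_S |v(s, D)|² dμ(s) + 4q² ∫_S ∫₀^D |∂₂v(s,x)|² dx dμ(s). -/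
/-!
Along each fibre `x ↦ v (s, x)` the fundamental theorem of calculus, integrated back from the far
end `D`, bounds `‖v (s, x)‖` by `‖v (s, D)‖ + ∫₀ᴰ ‖∂₂v (s, ·)‖`. Squaring, using Cauchy–Schwarz on
`(0, D)` and integrating over `x` gives the one-dimensional estimate
`∫₀ᴰ ‖v‖² ≤ 2D ‖v (s, D)‖² + 2D² ∫₀ᴰ ‖∂₂v‖²`, and `kD = q` turns it into the claim once it is
integrated over `s`.
-/

open MeasureTheory Set

section CauchySchwarz

variable {α : Type*} [MeasurableSpace α] {μ : Measure α} [IsFiniteMeasure μ]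

theorem sq_integral_le_measureReal_univ_mul_integral_sq {f : α → ℝ} (hf : Integrable f μ)
    (hf2 : Integrable (fun x => f x ^ 2) μ) :
    (∫ x, f x ∂μ) ^ 2 ≤ μ.real univ * ∫ x, f x ^ 2 ∂μ := by
  rcases eq_zero_or_neZero μ with rfl | _
  · simp
  have hjensen : (⨍ x, f x ∂μ) ^ 2 ≤ ⨍ x, f x ^ 2 ∂μ :=
    (Even.convexOn_pow even_two).map_average_le (continuous_pow 2).continuousOn isClosed_univ
      (Filter.Eventually.of_forall fun _ => mem_univ _) hf hf2
  have hm : 0 < μ.real univ := by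
    rw [measureReal_def]
    exact ENNReal.toReal_pos (NeZero.ne (μ univ)) (measure_ne_top μ univ)
  rw [average_eq, average_eq, smul_eq_mul, smul_eq_mul] at hjensen
  field_simp at hjensen
  exact hjensen

end CauchySchwarz

section Interval

variable {E : Type*} [NormedAddCommGroup E] [NormedSpace ℝ E] [CompleteSpace E]
  {a b : ℝ} {f g : ℝ → E}

theorem norm_le_norm_right_add_integral_norm_deriv
    (hf : ∀ x ∈ Icc a b, HasDerivWithinAt f (g x) (Icc a b) x) (hg : IntegrableOn g (Icc a b))
    {x : ℝ} (hx : x ∈ Icc a b) :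
    ‖f x‖ ≤ ‖f b‖ + ∫ t in Ioo a b, ‖g t‖ := by
  have hxb : Icc x b ⊆ Icc a b := Icc_subset_Icc_left hx.1
  have hftc : ∫ t in x..b, g t = f b - f x := by
    refine intervalIntegral.integral_eq_sub_of_hasDeriv_right_of_le hx.2
      (fun t ht => (hf t (hxb ht)).continuousWithinAt.mono hxb) (fun t ht => ?_)
      ((intervalIntegrable_iff_integrableOn_Icc_of_le hx.2).2 (hg.mono_set hxb))
    have ht' : t ∈ Ioo a b := ⟨hx.1.trans_lt ht.1, ht.2⟩
    exact ((hf t (Ioo_subset_Icc_self ht')).hasDerivAt (Icc_mem_nhds ht'.1 ht'.2)).hasDerivWithinAt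
  calc ‖f x‖ = ‖f b - ∫ t in x..b, g t‖ := by rw [hftc, sub_sub_cancel]
    _ ≤ ‖f b‖ + ∫ t in Ioc x b, ‖g t‖ :=
      (norm_sub_le _ _).trans (add_le_add_right
        (uIoc_of_le hx.2 ▸ intervalIntegral.norm_integral_le_integral_norm_uIoc) _)
    _ ≤ ‖f b‖ + ∫ t in Ioc a b, ‖g t‖ :=
      add_le_add_right (setIntegral_mono_set (hg.mono_set Ioc_subset_Icc_self).norm
        (ae_of_all _ fun _ => norm_nonneg _) (Ioc_subset_Ioc_left hx.1).eventuallyLE) _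
    _ = ‖f b‖ + ∫ t in Ioo a b, ‖g t‖ := by rw [integral_Ioc_eq_integral_Ioo]

theorem integral_norm_sq_le_of_hasDerivWithinAt (hab : a ≤ b)
    (hf : ∀ x ∈ Icc a b, HasDerivWithinAt f (g x) (Icc a b) x) (hg : ContinuousOn g (Icc a b)) :
    ∫ x in Ioo a b, ‖f x‖ ^ 2 ≤
      2 * (b - a) * ‖f b‖ ^ 2 + 2 * (b - a) ^ 2 * ∫ x in Ioo a b, ‖g x‖ ^ 2 := by
  have hgi : IntegrableOn g (Icc a b) := hg.integrableOn_compact isCompact_Icc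
  set A := ∫ t in Ioo a b, ‖g t‖
  have hpointwise : ∀ x ∈ Ioo a b, ‖f x‖ ^ 2 ≤ 2 * ‖f b‖ ^ 2 + 2 * A ^ 2 := fun x hx =>
    (pow_le_pow_left₀ (norm_nonneg _)
      (norm_le_norm_right_add_integral_norm_deriv hf hgi (Ioo_subset_Icc_self hx)) 2).trans
      (by linarith [add_sq_le (a := ‖f b‖) (b := A)])
  have hcs : A ^ 2 ≤ (b - a) * ∫ x in Ioo a b, ‖g x‖ ^ 2 := by
    simpa only [measureReal_restrict_apply_univ, Real.volume_real_Ioo_of_le hab] using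
      sq_integral_le_measureReal_univ_mul_integral_sq (μ := volume.restrict (Ioo a b))
        (hgi.mono_set Ioo_subset_Icc_self).norm
        (((hg.norm.pow 2).integrableOn_compact isCompact_Icc).mono_set Ioo_subset_Icc_self)
  have hfc : ContinuousOn f (Icc a b) := fun x hx => (hf x hx).continuousWithinAt
  have hf2 : IntegrableOn (fun x => ‖f x‖ ^ 2) (Ioo a b) :=
    ((hfc.norm.pow 2).integrableOn_compact isCompact_Icc).mono_set Ioo_subset_Icc_self
  calc ∫ x in Ioo a b, ‖f x‖ ^ 2 ≤ ∫ _ in Ioo a b, (2 * ‖f b‖ ^ 2 + 2 * A ^ 2) :=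
        setIntegral_mono_on hf2 (integrableOn_const measure_Ioo_lt_top.ne) measurableSet_Ioo
          hpointwise
    _ = (b - a) * (2 * ‖f b‖ ^ 2 + 2 * A ^ 2) := by
        rw [setIntegral_const, Real.volume_real_Ioo_of_le hab, smul_eq_mul]
    _ ≤ _ := by linarith [mul_le_mul_of_nonneg_left hcs (sub_nonneg.2 hab)]

end Interval

theorem stmt1_general {S : Type*} [MeasurableSpace S] (μ : Measure S)
    (k q : ℝ) (hk : 0 < k) (hq : 0 < q) (D : ℝ) (hD : D = q / k)
    (v w : S × ℝ → ℂ)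
    (hderiv : ∀ᵐ s ∂μ, ∀ x ∈ Icc (0 : ℝ) D,
      HasDerivWithinAt (fun y => v (s, y)) (w (s, x)) (Icc (0 : ℝ) D) x)
    (hwcont : ∀ᵐ s ∂μ, ContinuousOn (fun x => w (s, x)) (Icc (0 : ℝ) D))
    (hint1 : Integrable (fun p : S × ℝ => ‖v p‖ ^ 2)
      (μ.prod (volume.restrict (Ioo (0 : ℝ) D))))
    (hint2 : Integrable (fun p : S × ℝ => ‖w p‖ ^ 2)
      (μ.prod (volume.restrict (Ioo (0 : ℝ) D))))
    (hint3 : Integrable (fun s => ‖v (s, D)‖ ^ 2) μ) :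
    k ^ 2 * ∫ s, (∫ x in Ioo (0 : ℝ) D, ‖v (s, x)‖ ^ 2) ∂μ ≤
      2 * q * k * ∫ s, ‖v (s, D)‖ ^ 2 ∂μ +
        4 * q ^ 2 * ∫ s, (∫ x in Ioo (0 : ℝ) D, ‖w (s, x)‖ ^ 2) ∂μ := by
  have hD0 : 0 < D := hD ▸ div_pos hq hk
  have hkD : k * D = q := by rw [hD, mul_div_cancel₀ q hk.ne']
  have hfibre : ∀ᵐ s ∂μ, k ^ 2 * ∫ x in Ioo (0 : ℝ) D, ‖v (s, x)‖ ^ 2 ≤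
      2 * q * k * ‖v (s, D)‖ ^ 2 + 4 * q ^ 2 * ∫ x in Ioo (0 : ℝ) D, ‖w (s, x)‖ ^ 2 := by
    filter_upwards [hderiv, hwcont] with s hvs hws
    have h := integral_norm_sq_le_of_hasDerivWithinAt hD0.le hvs hws
    rw [sub_zero] at h
    calc k ^ 2 * ∫ x in Ioo (0 : ℝ) D, ‖v (s, x)‖ ^ 2
        ≤ k ^ 2 * (2 * D * ‖v (s, D)‖ ^ 2 + 2 * D ^ 2 * ∫ x in Ioo (0 : ℝ) D, ‖w (s, x)‖ ^ 2) := by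
          gcongr
      _ = 2 * q * k * ‖v (s, D)‖ ^ 2 + 2 * q ^ 2 * ∫ x in Ioo (0 : ℝ) D, ‖w (s, x)‖ ^ 2 := by
          rw [← hkD]; ring
      _ ≤ _ := by gcongr; norm_num
  have hw : Integrable (fun s => ∫ x in Ioo (0 : ℝ) D, ‖w (s, x)‖ ^ 2) μ :=
    hint2.integral_prod_left
  calc k ^ 2 * ∫ s, (∫ x in Ioo (0 : ℝ) D, ‖v (s, x)‖ ^ 2) ∂μ
      = ∫ s, k ^ 2 * (∫ x in Ioo (0 : ℝ) D, ‖v (s, x)‖ ^ 2) ∂μ := (integral_const_mul _ _).symm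
    _ ≤ ∫ s, (2 * q * k * ‖v (s, D)‖ ^ 2 +
          4 * q ^ 2 * ∫ x in Ioo (0 : ℝ) D, ‖w (s, x)‖ ^ 2) ∂μ :=
      integral_mono_ae (hint1.integral_prod_left.const_mul _)
        ((hint3.const_mul _).add (hw.const_mul _)) hfibre
    _ = _ := by
      rw [integral_add (hint3.const_mul _) (hw.const_mul _), integral_const_mul,
        integral_const_mul]

theorem stmt1 {S : Type*} [MeasurableSpace S] (μ : Measure S)
    (k q : ℝ) (hk : 0 < k) (hq : 0 < q) (D : ℝ) (hD : D = q / k)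
    (v w : S × ℝ → ℂ) (hv : Measurable v)
    (hderiv : ∀ᵐ s ∂μ, ∀ x ∈ Icc (0 : ℝ) D,
      HasDerivWithinAt (fun y => v (s, y)) (w (s, x)) (Icc (0 : ℝ) D) x)
    (hwcont : ∀ᵐ s ∂μ, ContinuousOn (fun x => w (s, x)) (Icc (0 : ℝ) D))
    (hint1 : Integrable (fun p : S × ℝ => ‖v p‖ ^ 2)
      (μ.prod (volume.restrict (Ioo (0 : ℝ) D))))
    (hint2 : Integrable (fun p : S × ℝ => ‖w p‖ ^ 2)
      (μ.prod (volume.restrict (Ioo (0 : ℝ) D))))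
    (hint3 : Integrable (fun s => ‖v (s, D)‖ ^ 2) μ) :
    k ^ 2 * ∫ s, (∫ x in Ioo (0 : ℝ) D, ‖v (s, x)‖ ^ 2) ∂μ ≤
      2 * q * k * ∫ s, ‖v (s, D)‖ ^ 2 ∂μ +
        4 * q ^ 2 * ∫ s, (∫ x in Ioo (0 : ℝ) D, ‖w (s, x)‖ ^ 2) ∂μ :=
  stmt1_general μ k q hk hq D hD v w hderiv hwcont hint1 hint2 hint3
end

section
/- Let ψ : ℝ → ℂ be continuously differentiable on [0, ∞) with x ↦ |ψ(x)|² and x ↦ |ψ'(x)|² integrable on (0, ∞). Then for every τ ≥ 0 and every x ≥ 0 one has τ·|ψ(x)|² ≤ 2τ² ∫₀^∞ |ψ(s)|² ds + ∫₀^∞ |ψ'(s)|² ds. -/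
/-!
For `a ≤ x ≤ y`, `‖ψ x‖² - ‖ψ y‖² = -2 ∫ₓʸ ⟪ψ, ψ'⟫ ≤ ∫ₓʸ (τ ‖ψ‖² + ‖ψ'‖² / τ) ≤ τ I + J / τ`,
where `I`, `J` are the integrals of `‖ψ‖²`, `‖ψ'‖²` over the half-line. Averaging this over
`y ∈ [x, x + 1/τ]` bounds the `‖ψ y‖²` term by `τ I`, so `‖ψ x‖² / τ ≤ 2 I + J / τ²`.
-/

open MeasureTheory Set
open scoped RealInnerProductSpace

lemma two_mul_le_mul_sq_add_sq_div {τ : ℝ} (hτ : 0 < τ) (a b : ℝ) :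
    2 * (a * b) ≤ τ * a ^ 2 + b ^ 2 / τ := by
  have hsq : τ * a ^ 2 + b ^ 2 / τ - 2 * (a * b) = (τ * a - b) ^ 2 / τ := by
    field_simp; ring
  have : 0 ≤ (τ * a - b) ^ 2 / τ := by positivity
  linarith

lemma intervalIntegral_le_setIntegral_Ioi {f : ℝ → ℝ} {a x y : ℝ} (hax : a ≤ x) (hxy : x ≤ y)
    (hf : IntegrableOn f (Ioi a)) (hf0 : ∀ t, 0 ≤ f t) :
    ∫ t in x..y, f t ≤ ∫ t in Ioi a, f t := by
  rw [intervalIntegral.integral_of_le hxy]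
  exact setIntegral_mono_set hf (.of_forall hf0)
    (Ioc_subset_Ioi_self.trans (Ioi_subset_Ioi hax)).eventuallyLE

variable {F : Type*} [NormedAddCommGroup F] [InnerProductSpace ℝ F] {ψ ψ' : ℝ → F}

lemma sq_norm_le_sq_norm_add_integral {x y : ℝ} (hxy : x ≤ y)
    (hderiv : ∀ t ∈ Icc x y, HasDerivWithinAt ψ (ψ' t) (Icc x y) t)
    (hcont : ContinuousOn ψ' (Icc x y)) :
    ‖ψ x‖ ^ 2 ≤ ‖ψ y‖ ^ 2 + ∫ t in x..y, 2 * (‖ψ t‖ * ‖ψ' t‖) := by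
  have hψ : ContinuousOn ψ (Icc x y) := fun t ht => (hderiv t ht).continuousWithinAt
  have hD : ContinuousOn (fun t => 2 * ⟪ψ t, ψ' t⟫) (Icc x y) :=
    continuousOn_const.mul (hψ.inner hcont)
  have hftc : ∫ t in x..y, 2 * ⟪ψ t, ψ' t⟫ = ‖ψ y‖ ^ 2 - ‖ψ x‖ ^ 2 :=
    intervalIntegral.integral_eq_sub_of_hasDeriv_right_of_le hxy (hψ.norm.pow 2)
      (fun t ht => ((hderiv t (Ioo_subset_Icc_self ht)).norm_sq.hasDerivAt
        (Icc_mem_nhds ht.1 ht.2)).hasDerivWithinAt)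
      (hD.intervalIntegrable_of_Icc hxy)
  have hmono : ∫ t in x..y, -(2 * ⟪ψ t, ψ' t⟫) ≤ ∫ t in x..y, 2 * (‖ψ t‖ * ‖ψ' t‖) :=
    intervalIntegral.integral_mono_on hxy (hD.neg.intervalIntegrable_of_Icc hxy)
      ((continuousOn_const.mul (hψ.norm.mul hcont.norm)).intervalIntegrable_of_Icc hxy)
      fun t _ => by linarith [neg_le_of_abs_le (abs_real_inner_le_norm (ψ t) (ψ' t))]
  rw [intervalIntegral.integral_neg, hftc] at hmono
  linarith

lemma sq_norm_le_sq_norm_add_of_le {a τ x y : ℝ}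
    (hderiv : ∀ x ∈ Ici a, HasDerivWithinAt ψ (ψ' x) (Ici a) x)
    (hcont : ContinuousOn ψ' (Ici a))
    (hint1 : IntegrableOn (fun x => ‖ψ x‖ ^ 2) (Ioi a))
    (hint2 : IntegrableOn (fun x => ‖ψ' x‖ ^ 2) (Ioi a))
    (hτ : 0 < τ) (hax : a ≤ x) (hxy : x ≤ y) :
    ‖ψ x‖ ^ 2 ≤ ‖ψ y‖ ^ 2 +
      (τ * (∫ s in Ioi a, ‖ψ s‖ ^ 2) + (∫ s in Ioi a, ‖ψ' s‖ ^ 2) / τ) := by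
  have hsub : Icc x y ⊆ Ici a := fun t ht => hax.trans ht.1
  have hψ : ContinuousOn ψ (uIcc x y) := by
    rw [uIcc_of_le hxy]
    exact fun t ht => (hderiv t (hsub ht)).continuousWithinAt.mono hsub
  have hψ' : ContinuousOn ψ' (uIcc x y) := by rw [uIcc_of_le hxy]; exact hcont.mono hsub
  have hint : IntegrableOn (fun t => τ * ‖ψ t‖ ^ 2 + ‖ψ' t‖ ^ 2 / τ) (Ioi a) :=
    (hint1.const_mul τ).add (hint2.div_const τ)
  calc ‖ψ x‖ ^ 2 ≤ ‖ψ y‖ ^ 2 + ∫ t in x..y, 2 * (‖ψ t‖ * ‖ψ' t‖) :=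
        sq_norm_le_sq_norm_add_integral hxy (fun t ht => (hderiv t (hsub ht)).mono hsub)
          (hcont.mono hsub)
    _ ≤ ‖ψ y‖ ^ 2 + ∫ t in x..y, (τ * ‖ψ t‖ ^ 2 + ‖ψ' t‖ ^ 2 / τ) := by
      gcongr
      exact intervalIntegral.integral_mono_on hxy
        (continuousOn_const.mul (hψ.norm.mul hψ'.norm)).intervalIntegrable
        ((intervalIntegrable_iff_integrableOn_Ioc_of_le hxy).2
          (hint.mono_set (Ioc_subset_Ioi_self.trans (Ioi_subset_Ioi hax))))
        fun t _ => two_mul_le_mul_sq_add_sq_div hτ _ _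
    _ ≤ ‖ψ y‖ ^ 2 + ∫ t in Ioi a, (τ * ‖ψ t‖ ^ 2 + ‖ψ' t‖ ^ 2 / τ) := by
      gcongr
      exact intervalIntegral_le_setIntegral_Ioi hax hxy hint fun t => by positivity
    _ = _ := by
      rw [integral_add (hint1.const_mul τ) (hint2.div_const τ), integral_const_mul, integral_div]

theorem mul_sq_norm_le_of_integrableOn_Ioi {a τ x : ℝ}
    (hderiv : ∀ x ∈ Ici a, HasDerivWithinAt ψ (ψ' x) (Ici a) x)
    (hcont : ContinuousOn ψ' (Ici a))
    (hint1 : IntegrableOn (fun x => ‖ψ x‖ ^ 2) (Ioi a))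
    (hint2 : IntegrableOn (fun x => ‖ψ' x‖ ^ 2) (Ioi a))
    (hτ : 0 < τ) (hax : a ≤ x) :
    τ * ‖ψ x‖ ^ 2 ≤
      2 * τ ^ 2 * (∫ s in Ioi a, ‖ψ s‖ ^ 2) + ∫ s in Ioi a, ‖ψ' s‖ ^ 2 := by
  set I := ∫ s in Ioi a, ‖ψ s‖ ^ 2
  set J := ∫ s in Ioi a, ‖ψ' s‖ ^ 2
  have hxb : x ≤ x + τ⁻¹ := le_add_of_nonneg_right (inv_nonneg.2 hτ.le)
  have hψ : IntervalIntegrable (fun y => ‖ψ y‖ ^ 2) volume x (x + τ⁻¹) :=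
    (intervalIntegrable_iff_integrableOn_Ioc_of_le hxb).2
      (hint1.mono_set (Ioc_subset_Ioi_self.trans (Ioi_subset_Ioi hax)))
  have havg : τ⁻¹ * ‖ψ x‖ ^ 2 ≤ I + τ⁻¹ * (τ * I + J / τ) :=
    calc τ⁻¹ * ‖ψ x‖ ^ 2 = ∫ _ in x..x + τ⁻¹, ‖ψ x‖ ^ 2 := by simp
      _ ≤ ∫ y in x..x + τ⁻¹, (‖ψ y‖ ^ 2 + (τ * I + J / τ)) :=
        intervalIntegral.integral_mono_on hxb intervalIntegrable_const
          (hψ.add intervalIntegrable_const) fun y hy =>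
            sq_norm_le_sq_norm_add_of_le hderiv hcont hint1 hint2 hτ hax hy.1
      _ = (∫ y in x..x + τ⁻¹, ‖ψ y‖ ^ 2) + τ⁻¹ * (τ * I + J / τ) := by
        rw [intervalIntegral.integral_add hψ intervalIntegrable_const,
          intervalIntegral.integral_const, smul_eq_mul, add_sub_cancel_left]
      _ ≤ I + τ⁻¹ * (τ * I + J / τ) := by
        gcongr
        exact intervalIntegral_le_setIntegral_Ioi hax hxb hint1 fun t => by positivity
  calc τ * ‖ψ x‖ ^ 2 = τ ^ 2 * (τ⁻¹ * ‖ψ x‖ ^ 2) := by field_simp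
    _ ≤ τ ^ 2 * (I + τ⁻¹ * (τ * I + J / τ)) := by gcongr
    _ = 2 * τ ^ 2 * I + J := by field_simp; ring

theorem stmt3 (ψ ψ' : ℝ → ℂ)
    (hderiv : ∀ x ∈ Ici (0 : ℝ), HasDerivWithinAt ψ (ψ' x) (Ici (0 : ℝ)) x)
    (hcont : ContinuousOn ψ' (Ici (0 : ℝ)))
    (hint1 : IntegrableOn (fun x => ‖ψ x‖ ^ 2) (Ioi (0 : ℝ)))
    (hint2 : IntegrableOn (fun x => ‖ψ' x‖ ^ 2) (Ioi (0 : ℝ))) :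
    ∀ τ ≥ (0 : ℝ), ∀ x ≥ (0 : ℝ),
      τ * ‖ψ x‖ ^ 2 ≤
        2 * τ ^ 2 * (∫ s in Ioi (0 : ℝ), ‖ψ s‖ ^ 2) +
          ∫ s in Ioi (0 : ℝ), ‖ψ' s‖ ^ 2 := by
  intro τ hτ x hx
  rcases hτ.eq_or_lt with rfl | hτ
  · simpa using setIntegral_nonneg measurableSet_Ioi fun s _ => sq_nonneg ‖ψ' s‖
  · exact mul_sq_norm_le_of_integrableOn_Ioi hderiv hcont hint1 hint2 hτ hx
end

section
/- Let d ≥ 1, k > 0, and let γ ∈ ℂ be a damping parameter with γ_r := Re γ ≥ 1 and γ_i := Im γ ≥ 1. Let Ω₀, C ⊆ ℝ^d be disjoint measurable sets, let t : ℝ^d → ℝ^d be a measurable vector field with |t(x)| = 1 for all x, and let φ : ℝ^d → ℂ be continuously differentiable with compact support. Define ∂×φ(x) as the derivative of φ at x in the direction t(x), ∇φ(x) ∈ ℂ^d as the vector of partial derivatives of φ at x, |∇⊥φ(x)|² := |∇φ(x)|² − |∂×φ(x)|², and set B := −k²(∫_{Ω₀} |φ|² + γ·∫_C |φ|²) + ∫_{Ω₀}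 |∇φ|² + γ·∫_C |∇⊥φ|² + γ⁻¹·∫_C |∂×φ|². Then (2γ_r/|γ|²)·∫_C |∂×φ|² ≤ Re((i·conj(γ)/γ_i)·B) + k²·∫_{Ω₀} |φ|². -/
open MeasureTheory ComplexConjugate

namespace Complex

variable {γ : ℂ}

lemma re_I_mul_conj_div_im_mul_ofReal (hγ : γ.im ≠ 0) (r : ℝ) :
    (I * conj γ / γ.im * r).re = r := by
  simp only [div_mul_eq_mul_div, div_re, mul_re, mul_im, I_re, I_im, conj_re, conj_im,
    ofReal_re, ofReal_im, normSq_ofReal]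
  field_simp
  ring

lemma re_I_mul_conj_div_im_mul_mul_ofReal (r : ℝ) :
    (I * conj γ / γ.im * (γ * r)).re = 0 := by
  simp only [div_mul_eq_mul_div, div_re, mul_re, mul_im, I_re, I_im, conj_re, conj_im,
    ofReal_re, ofReal_im]
  ring

lemma re_I_mul_conj_div_im_mul_inv_mul_ofReal (hγ : γ.im ≠ 0) (r : ℝ) :
    (I * conj γ / γ.im * (γ⁻¹ * r)).re = 2 * γ.re / ‖γ‖ ^ 2 * r := by
  have hnormSq : normSq γ ≠ 0 := normSq_eq_zero.not.mpr fun h ↦ hγ (by simp [h])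
  simp only [div_mul_eq_mul_div, div_re, mul_re, mul_im, inv_re, inv_im, I_re, I_im, conj_re,
    conj_im, ofReal_re, ofReal_im, Complex.sq_norm, normSq_ofReal]
  rw [normSq_apply] at hnormSq ⊢
  field_simp
  ring

/-- Multiplying by `i γ̄ / γ_i` makes the `γ`-weighted terms purely imaginary, leaves the
real terms unchanged and turns `γ⁻¹` into `2 γ_r / |γ|²` in the real part. -/
lemma re_I_mul_conj_div_im_mul_garding (hγ : γ.im ≠ 0) (k P₀ P G₀ G D : ℝ) :
    (I * conj γ / γ.im *
        (-(k : ℂ) ^ 2 * ((P₀ : ℂ) + γ * P) + G₀ + γ * G + γ⁻¹ * D)).re =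
      -k ^ 2 * P₀ + G₀ + 2 * γ.re / ‖γ‖ ^ 2 * D := by
  have hsplit : -(k : ℂ) ^ 2 * ((P₀ : ℂ) + γ * P) + G₀ + γ * G + γ⁻¹ * D =
      ((-k ^ 2 * P₀ + G₀ : ℝ) : ℂ) + γ * ((-k ^ 2 * P + G : ℝ) : ℂ) + γ⁻¹ * D := by
    push_cast
    ring
  rw [hsplit, mul_add, mul_add, add_re, add_re, re_I_mul_conj_div_im_mul_ofReal hγ,
    re_I_mul_conj_div_im_mul_mul_ofReal, re_I_mul_conj_div_im_mul_inv_mul_ofReal hγ]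
  ring

end Complex

theorem stmt8_general (d : ℕ) (k : ℝ)
    (γ : ℂ) (hi : 1 ≤ γ.im)
    (Ω₀ C : Set (EuclideanSpace ℝ (Fin d)))
    (φ : EuclideanSpace ℝ (Fin d) → ℂ)
    (dxφ : EuclideanSpace ℝ (Fin d) → ℂ)
    (g : EuclideanSpace ℝ (Fin d) → ℝ)
    (hg : ∀ x, g x = ∑ i, ‖fderiv ℝ φ x (EuclideanSpace.single i 1)‖ ^ 2)
    (gperp : EuclideanSpace ℝ (Fin d) → ℝ)
    (B : ℂ)
    (hB : B = -(k : ℂ) ^ 2 *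
          (((∫ x in Ω₀, ‖φ x‖ ^ 2 : ℝ) : ℂ) + γ * ((∫ x in C, ‖φ x‖ ^ 2 : ℝ) : ℂ))
        + ((∫ x in Ω₀, g x : ℝ) : ℂ) + γ * ((∫ x in C, gperp x : ℝ) : ℂ)
        + γ⁻¹ * ((∫ x in C, ‖dxφ x‖ ^ 2 : ℝ) : ℂ)) :
    2 * γ.re / ‖γ‖ ^ 2 * (∫ x in C, ‖dxφ x‖ ^ 2) ≤
      ((Complex.I * (starRingEnd ℂ γ) / (γ.im : ℂ)) * B).re +
        k ^ 2 * ∫ x in Ω₀, ‖φ x‖ ^ 2 := by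
  have hγ : γ.im ≠ 0 := (one_pos.trans_le hi).ne'
  have hg_nonneg : 0 ≤ ∫ x in Ω₀, g x :=
    integral_nonneg fun x ↦ (hg x).symm ▸ Finset.sum_nonneg fun i _ ↦ sq_nonneg _
  rw [hB, Complex.re_I_mul_conj_div_im_mul_garding hγ]
  linarith

theorem stmt8 (d : ℕ) (hd : 1 ≤ d) (k : ℝ) (hk : 0 < k)
    (γ : ℂ) (hr : 1 ≤ γ.re) (hi : 1 ≤ γ.im)
    (Ω₀ C : Set (EuclideanSpace ℝ (Fin d)))
    (hΩ₀ : MeasurableSet Ω₀) (hC : MeasurableSet C) (hdisj : Disjoint Ω₀ C)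
    (t : EuclideanSpace ℝ (Fin d) → EuclideanSpace ℝ (Fin d))
    (ht : Measurable t) (htunit : ∀ x, ‖t x‖ = 1)
    (φ : EuclideanSpace ℝ (Fin d) → ℂ)
    (hφ : ContDiff ℝ 1 φ) (hsupp : HasCompactSupport φ)
    (dxφ : EuclideanSpace ℝ (Fin d) → ℂ)
    (hdx : ∀ x, dxφ x = fderiv ℝ φ x (t x))
    (g : EuclideanSpace ℝ (Fin d) → ℝ)
    (hg : ∀ x, g x = ∑ i, ‖fderiv ℝ φ x (EuclideanSpace.single i 1)‖ ^ 2)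
    (gperp : EuclideanSpace ℝ (Fin d) → ℝ)
    (hgperp : ∀ x, gperp x = g x - ‖dxφ x‖ ^ 2)
    (B : ℂ)
    (hB : B = -(k : ℂ) ^ 2 *
          (((∫ x in Ω₀, ‖φ x‖ ^ 2 : ℝ) : ℂ) + γ * ((∫ x in C, ‖φ x‖ ^ 2 : ℝ) : ℂ))
        + ((∫ x in Ω₀, g x : ℝ) : ℂ) + γ * ((∫ x in C, gperp x : ℝ) : ℂ)
        + γ⁻¹ * ((∫ x in C, ‖dxφ x‖ ^ 2 : ℝ) : ℂ)) :
    2 * γ.re / ‖γ‖ ^ 2 * (∫ x in C, ‖dxφ x‖ ^ 2) ≤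
      ((Complex.I * (starRingEnd ℂ γ) / (γ.im : ℂ)) * B).re +
        k ^ 2 * ∫ x in Ω₀, ‖φ x‖ ^ 2 :=
  stmt8_general d k γ hi Ω₀ C φ dxφ g hg gperp B hB
end

section
/- Let d ≥ 1, k > 0, and let γ ∈ ℂ be a damping parameter with γ_r := Re γ ≥ 1 and γ_i := Im γ ≥ 1. Let Ω₀, C ⊆ ℝ^d be disjoint measurable sets, let t : ℝ^d → ℝ^d be a measurable vector field with |t(x)| = 1 for all x, and let φ : ℝ^d → ℂ be continuously differentiable with compact support. Define ∂×φ(x) as the derivative of φ at x in the direction t(x), ∇φ(x) ∈ ℂ^d as the vector of partial derivatives of φ at x, |∇⊥φ(x)|² := |∇φ(x)|² − |∂×φ(x)|², and set B := −k²(∫_{Ω₀} |φ|² + γ·∫_C |φ|²) + ∫_{Ω₀} |∇φ|² + γ·∫_C |∇⊥φ|² + γ⁻¹·∫_C |∂×φ|². Then the identity Re((i·conj(γ)/γ_i)·B) = (2γ_r/|γ|²)·∫_C |∂×φ|² + ∫_{Ω₀} |∇φ|² − k²·∫_{Ω₀} |φ|² holds. -/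
open MeasureTheory Complex ComplexConjugate

/-!
Every integral in `B` is real, so `B` is a real-linear combination of `1`, `γ` and `γ⁻¹`, and it
suffices to know the real parts of `w`, `w γ` and `w γ⁻¹` for the multiplier
`w = i conj(γ) / γ_i`: they are `1`, `0` (as `w γ = i |γ|² / γ_i`) and `2 γ_r / |γ|²`.
-/

namespace PMLRotation

variable {γ : ℂ}

lemma re_I_mul_conj_div_im (hγ : γ.im ≠ 0) : (I * conj γ / γ.im).re = 1 := by
  simp [div_ofReal_re, hγ]

lemma re_I_mul_conj_div_im_mul_self : (I * conj γ / γ.im * γ).re = 0 := by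
  rw [div_mul_eq_mul_div, mul_assoc, conj_mul', ← ofReal_pow, div_ofReal_re, re_mul_ofReal]
  simp

lemma re_I_mul_conj_div_im_mul_inv (hγ : γ.im ≠ 0) :
    (I * conj γ / γ.im * γ⁻¹).re = 2 * γ.re / ‖γ‖ ^ 2 := by
  rw [Complex.sq_norm, normSq_apply]
  simp only [div_re, div_im, mul_re, mul_im, I_re, I_im, conj_re, conj_im, inv_re, inv_im,
    ofReal_re, ofReal_im, normSq_apply]
  field_simp
  ring

lemma re_I_mul_conj_div_im_mul_form (hγ : γ.im ≠ 0) (k a b c e f : ℝ) :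
    ((I * conj γ / γ.im) * (-(k : ℂ) ^ 2 * (a + γ * b) + c + γ * e + γ⁻¹ * f)).re =
      2 * γ.re / ‖γ‖ ^ 2 * f + c - k ^ 2 * a := by
  have hexpand : (I * conj γ / γ.im) * (-(k : ℂ) ^ 2 * (a + γ * b) + c + γ * e + γ⁻¹ * f) =
      (-k ^ 2 * a + c : ℝ) * (I * conj γ / γ.im) + (-k ^ 2 * b + e : ℝ) * (I * conj γ / γ.im * γ)
        + f * (I * conj γ / γ.im * γ⁻¹) := by
    push_cast; ring
  rw [hexpand]
  simp only [add_re, re_ofReal_mul, re_I_mul_conj_div_im hγ, re_I_mul_conj_div_im_mul_self,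
    re_I_mul_conj_div_im_mul_inv hγ]
  ring

end PMLRotation

theorem stmt9_general (d : ℕ) (k : ℝ)
    (γ : ℂ) (hi : 1 ≤ γ.im)
    (Ω₀ C : Set (EuclideanSpace ℝ (Fin d)))
    (φ : EuclideanSpace ℝ (Fin d) → ℂ)
    (dxφ : EuclideanSpace ℝ (Fin d) → ℂ)
    (g : EuclideanSpace ℝ (Fin d) → ℝ)
    (gperp : EuclideanSpace ℝ (Fin d) → ℝ)
    (B : ℂ)
    (hB : B = -(k : ℂ) ^ 2 *
          (((∫ x in Ω₀, ‖φ x‖ ^ 2 : ℝ) : ℂ) + γ * ((∫ x in C, ‖φ x‖ ^ 2 : ℝ) : ℂ))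
        + ((∫ x in Ω₀, g x : ℝ) : ℂ) + γ * ((∫ x in C, gperp x : ℝ) : ℂ)
        + γ⁻¹ * ((∫ x in C, ‖dxφ x‖ ^ 2 : ℝ) : ℂ)) :
    ((Complex.I * (starRingEnd ℂ γ) / (γ.im : ℂ)) * B).re =
      2 * γ.re / ‖γ‖ ^ 2 * (∫ x in C, ‖dxφ x‖ ^ 2) +
        (∫ x in Ω₀, g x) - k ^ 2 * ∫ x in Ω₀, ‖φ x‖ ^ 2 := by
  subst hB
  exact PMLRotation.re_I_mul_conj_div_im_mul_form (by positivity) _ _ _ _ _ _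

theorem stmt9 (d : ℕ) (hd : 1 ≤ d) (k : ℝ) (hk : 0 < k)
    (γ : ℂ) (hr : 1 ≤ γ.re) (hi : 1 ≤ γ.im)
    (Ω₀ C : Set (EuclideanSpace ℝ (Fin d)))
    (hΩ₀ : MeasurableSet Ω₀) (hC : MeasurableSet C) (hdisj : Disjoint Ω₀ C)
    (t : EuclideanSpace ℝ (Fin d) → EuclideanSpace ℝ (Fin d))
    (ht : Measurable t) (htunit : ∀ x, ‖t x‖ = 1)
    (φ : EuclideanSpace ℝ (Fin d) → ℂ)
    (hφ : ContDiff ℝ 1 φ) (hsupp : HasCompactSupport φ)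
    (dxφ : EuclideanSpace ℝ (Fin d) → ℂ)
    (hdx : ∀ x, dxφ x = fderiv ℝ φ x (t x))
    (g : EuclideanSpace ℝ (Fin d) → ℝ)
    (hg : ∀ x, g x = ∑ i, ‖fderiv ℝ φ x (EuclideanSpace.single i 1)‖ ^ 2)
    (gperp : EuclideanSpace ℝ (Fin d) → ℝ)
    (hgperp : ∀ x, gperp x = g x - ‖dxφ x‖ ^ 2)
    (B : ℂ)
    (hB : B = -(k : ℂ) ^ 2 *
          (((∫ x in Ω₀, ‖φ x‖ ^ 2 : ℝ) : ℂ) + γ * ((∫ x in C, ‖φ x‖ ^ 2 : ℝ) : ℂ))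
        + ((∫ x in Ω₀, g x : ℝ) : ℂ) + γ * ((∫ x in C, gperp x : ℝ) : ℂ)
        + γ⁻¹ * ((∫ x in C, ‖dxφ x‖ ^ 2 : ℝ) : ℂ)) :
    ((Complex.I * (starRingEnd ℂ γ) / (γ.im : ℂ)) * B).re =
      2 * γ.re / ‖γ‖ ^ 2 * (∫ x in C, ‖dxφ x‖ ^ 2) +
        (∫ x in Ω₀, g x) - k ^ 2 * ∫ x in Ω₀, ‖φ x‖ ^ 2 :=
  stmt9_general d k γ hi Ω₀ C φ dxφ g gperp B hB
end

section
/- Let d ≥ 1, k ∈ ℝ, and let γ ∈ ℂ be a damping parameter with Re γ ≥ 1 and Im γ ≥ 1. Let t ∈ ℝ^d be a fixed unit vector and let φ : ℝ^d → ℂ be continuously differentiable with compact support. Define ∂×φ(x) as the derivative of φ at x in the direction t, ∇φ(x) ∈ ℂ^d as the vector of partial derivatives of φ at x, and |∇⊥φ(x)|² := |∇φ(x)|² − |∂×φ(x)|². If the complex number −k²·∫_{ℝ^d} |φ|² + ∫_{ℝ^d} |∇⊥φ|² + γ⁻²·∫_{ℝ^d} |∂×φ|² equals 0, then φ is identically zero.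 -/
/-!
The first two terms of the form are real, so the imaginary part of the hypothesis reads
`Im(γ⁻²) · ∫ |∂ₜφ|² = 0`, and `Im(γ⁻²) ≠ 0` because `Re γ, Im γ ≠ 0`. Hence the continuous,
nonnegative `|∂ₜφ|²` vanishes identically: `φ` is constant along every line in direction `t`,
and each such line eventually leaves the compact support of `φ`.
-/

open MeasureTheory Filter

theorem Complex.im_inv_sq_ne_zero {z : ℂ} (hre : z.re ≠ 0) (him : z.im ≠ 0) :
    ((z ^ 2)⁻¹).im ≠ 0 := by
  have h_im_sq : (z ^ 2).im ≠ 0 := by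
    rw [sq, Complex.mul_im, mul_comm z.im, ← two_mul]
    exact mul_ne_zero two_ne_zero (mul_ne_zero hre him)
  have h_sq : z ^ 2 ≠ 0 := fun h => h_im_sq (by rw [h, Complex.zero_im])
  rw [Complex.inv_im]
  exact div_ne_zero (neg_ne_zero.mpr h_im_sq) (Complex.normSq_pos.mpr h_sq).ne'

theorem Complex.eq_zero_of_add_mul_ofReal_eq_zero {z c : ℂ} {r : ℝ} (hz : z.im = 0)
    (hc : c.im ≠ 0) (h : z + c * r = 0) : r = 0 := by
  have h_im := congrArg Complex.im h
  simp only [Complex.add_im, hz, Complex.mul_im, Complex.ofReal_im, Complex.ofReal_re,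
    zero_add, mul_zero, Complex.zero_im] at h_im
  exact (mul_eq_zero.mp h_im).resolve_left hc

theorem Continuous.eq_zero_of_integral_eq_zero_of_nonneg {X : Type*} [TopologicalSpace X]
    [MeasurableSpace X] [OpensMeasurableSpace X] {μ : Measure X} [μ.IsOpenPosMeasure]
    [IsFiniteMeasureOnCompacts μ] {f : X → ℝ} (hf : Continuous f) (hf_supp : HasCompactSupport f)
    (hf_nonneg : 0 ≤ f) (hf_int : ∫ x, f x ∂μ = 0) : f = 0 := by
  by_contra hne
  obtain ⟨x, hx⟩ := Function.ne_iff.mp hne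
  exact (hf.integral_pos_of_hasCompactSupport_nonneg_nonzero hf_supp hf_nonneg hx).ne' hf_int

theorem HasCompactSupport.eq_zero_of_fderiv_apply_eq_zero {E F : Type*} [NormedAddCommGroup E]
    [NormedSpace ℝ E] [NormedAddCommGroup F] [NormedSpace ℝ F] {f : E → F}
    (hf_supp : HasCompactSupport f) (hf : Differentiable ℝ f) {v : E} (hv : v ≠ 0)
    (hfv : ∀ x, fderiv ℝ f x v = 0) : f = 0 := by
  ext x
  set line : ℝ → E := fun s => x + s • v
  have h_line : ∀ s, HasDerivAt line v s := fun s =>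
    (((hasDerivAt_id s).smul_const v).const_add x).congr_deriv (one_smul ℝ v)
  have h_deriv : ∀ s, HasDerivAt (f ∘ line) 0 s := fun s => by
    simpa [hfv] using (hf (line s)).hasFDerivAt.comp_hasDerivAt s (h_line s)
  have h_const : ∀ s, f (line s) = f x := fun s => by
    simpa [line] using is_const_of_deriv_eq_zero (fun s => (h_deriv s).differentiableAt)
      (fun s => (h_deriv s).deriv) s 0
  have h_escape : Tendsto line atTop (cocompact E) := by
    refine tendsto_cocompact_of_tendsto_dist_comp_atTop x ?_
    simp only [line, dist_eq_norm, add_sub_cancel_left, norm_smul, Real.norm_eq_abs]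
    exact tendsto_abs_atTop_atTop.atTop_mul_const (norm_pos_iff.mpr hv)
  rw [hasCompactSupport_iff_eventuallyEq, coclosedCompact_eq_cocompact] at hf_supp
  obtain ⟨s, hs⟩ := (h_escape.eventually hf_supp).exists
  rw [← h_const s]
  exact hs

theorem stmt10_general (d : ℕ) (k : ℝ)
    (γ : ℂ) (hr : 1 ≤ γ.re) (hi : 1 ≤ γ.im)
    (t : EuclideanSpace ℝ (Fin d)) (ht : ‖t‖ = 1)
    (φ : EuclideanSpace ℝ (Fin d) → ℂ)
    (hφ : ContDiff ℝ 1 φ) (hsupp : HasCompactSupport φ)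
    (h0 : -(k : ℂ) ^ 2 * ((∫ x, ‖φ x‖ ^ 2 : ℝ) : ℂ)
        + ((∫ x, ((∑ i, ‖fderiv ℝ φ x (EuclideanSpace.single i 1)‖ ^ 2)
            - ‖fderiv ℝ φ x t‖ ^ 2) : ℝ) : ℂ)
        + (γ ^ 2)⁻¹ * ((∫ x, ‖fderiv ℝ φ x t‖ ^ 2 : ℝ) : ℂ) = 0) :
    ∀ x, φ x = 0 := by
  set g : EuclideanSpace ℝ (Fin d) → ℝ := fun x => ‖fderiv ℝ φ x t‖ ^ 2
  have hg_cont : Continuous g :=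
    ((hφ.continuous_fderiv one_ne_zero).clm_apply continuous_const).norm.pow 2
  have hg_supp : HasCompactSupport g :=
    (hsupp.fderiv ℝ).comp_left (g := fun L : _ →L[ℝ] ℂ => ‖L t‖ ^ 2) (by simp)
  have hg_int : ∫ x, g x = 0 :=
    Complex.eq_zero_of_add_mul_ofReal_eq_zero (by simp [sq])
      (Complex.im_inv_sq_ne_zero (by linarith) (by linarith)) h0
  have hg : g = 0 :=
    hg_cont.eq_zero_of_integral_eq_zero_of_nonneg hg_supp (fun x => by positivity) hg_int
  have ht0 : t ≠ 0 := norm_ne_zero_iff.mp (ht ▸ one_ne_zero)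
  refine congrFun
    (hsupp.eq_zero_of_fderiv_apply_eq_zero (hφ.differentiable one_ne_zero) ht0 fun x => ?_)
  simpa [g] using congrFun hg x

theorem stmt10 (d : ℕ) (hd : 1 ≤ d) (k : ℝ)
    (γ : ℂ) (hr : 1 ≤ γ.re) (hi : 1 ≤ γ.im)
    (t : EuclideanSpace ℝ (Fin d)) (ht : ‖t‖ = 1)
    (φ : EuclideanSpace ℝ (Fin d) → ℂ)
    (hφ : ContDiff ℝ 1 φ) (hsupp : HasCompactSupport φ)
    (h0 : -(k : ℂ) ^ 2 * ((∫ x, ‖φ x‖ ^ 2 : ℝ) : ℂ)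
        + ((∫ x, ((∑ i, ‖fderiv ℝ φ x (EuclideanSpace.single i 1)‖ ^ 2)
            - ‖fderiv ℝ φ x t‖ ^ 2) : ℝ) : ℂ)
        + (γ ^ 2)⁻¹ * ((∫ x, ‖fderiv ℝ φ x t‖ ^ 2 : ℝ) : ℂ) = 0) :
    ∀ x, φ x = 0 :=
  stmt10_general d k γ hr hi t ht φ hφ hsupp h0
end
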